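/- Let n ≥ 3 and define Vᵢ(x) = xᵢ/(1+|x|²)^(n/2) for i = 1,…,n and V₀(x) = (|x|²-1)/(1+|x|²)^(n/2). Then for all i,j ∈ {0,1,…,n} with i ≠ j, we have ∫_{ℝⁿ} ⟨∇Vᵢ(x), ∇Vⱼ(x)⟩ dx = 0. -/

import Mathlib

/-!
Reflecting the `k`-th coordinate is a linear isometry of `ℝⁿ`, so it preserves Lebesgue measure
and commutes with taking gradients. It fixes every `Vᵢ` except the one built from `x_k`, which it
negates. Hence for that pair the integrand `⟪∇Vᵢ, ∇V_k⟫` is odd under the reflection and its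
integral equals its own negative. Every pair `i ≠ j` has one member of this form.
-/

open MeasureTheory RealInnerProductSpace

section Gradient

variable {E F : Type*} [NormedAddCommGroup E] [InnerProductSpace ℝ E] [CompleteSpace E]
  [NormedAddCommGroup F] [InnerProductSpace ℝ F] [CompleteSpace F]

theorem gradient_comp_linearIsometryEquiv (f : F → ℝ) (e : E ≃ₗᵢ[ℝ] F) (x : E) :
    gradient (f ∘ e) x = e.symm (gradient f (e x)) := by
  refine ext_inner_right ℝ fun v => ?_
  rw [inner_gradient_left, ← e.inner_map_map, e.apply_symm_apply, inner_gradient_left]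
  exact DFunLike.congr_fun (e.toContinuousLinearEquiv.comp_right_fderiv (f := f)) v

theorem gradient_neg (f : F → ℝ) (x : F) : gradient (-f) x = -gradient f x := by
  refine ext_inner_right ℝ fun v => ?_
  rw [inner_gradient_left, inner_neg_left, inner_gradient_left, fderiv_neg]
  rfl

end Gradient

section Symmetry

variable {F : Type*} [NormedAddCommGroup F] [InnerProductSpace ℝ F] [CompleteSpace F]
  [MeasurableSpace F] [BorelSpace F]

theorem integral_inner_gradient_eq_zero_of_comp_eq_of_comp_eq_neg {μ : Measure F}
    (e : F ≃ₗᵢ[ℝ] F) (he : MeasurePreserving e μ μ) {f g : F → ℝ}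
    (hf : f ∘ e = f) (hg : g ∘ e = -g) :
    ∫ x, ⟪gradient f x, gradient g x⟫ ∂μ = 0 := by
  have h_odd (x : F) :
      ⟪gradient f (e x), gradient g (e x)⟫ = -⟪gradient f x, gradient g x⟫ := by
    rw [← e.symm.inner_map_map, ← gradient_comp_linearIsometryEquiv,
      ← gradient_comp_linearIsometryEquiv, hf, hg, gradient_neg, inner_neg_right]
  have h_inv := he.integral_comp e.toHomeomorph.measurableEmbedding
    fun x => ⟪gradient f x, gradient g x⟫
  simp only [h_odd, integral_neg] at h_inv
  linarith

end Symmetry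

namespace EuclideanSpace

variable {ι : Type*} [Fintype ι] [DecidableEq ι]

noncomputable def reflectCoord (k : ι) : EuclideanSpace ℝ ι ≃ₗᵢ[ℝ] EuclideanSpace ℝ ι :=
  (ℝ ∙ single k (1 : ℝ))ᗮ.reflection

theorem reflectCoord_apply (k : ι) (x : EuclideanSpace ℝ ι) (m : ι) :
    reflectCoord k x m = if m = k then -x m else x m := by
  rw [reflectCoord, Submodule.reflection_orthogonal_apply, Submodule.reflection_singleton_apply]
  split_ifs with h
  · subst h
    simp only [inner_single_left, Real.ringHom_apply, one_mul, PiLp.norm_single, norm_one, one_pow,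
      div_one, neg_sub, PiLp.sub_apply, PiLp.smul_apply, PiLp.single_eq_same, smul_eq_mul, mul_one,
      nsmul_eq_mul, Nat.cast_ofNat]
    ring
  · simp [h, inner_single_left]

end EuclideanSpace

open EuclideanSpace

noncomputable def radialFamily (n : ℕ) (a b : ℝ → ℝ) :
    Fin (n + 1) → EuclideanSpace ℝ (Fin n) → ℝ :=
  Fin.cases (fun x => a ‖x‖) fun m x => x m / b ‖x‖

variable {n : ℕ} (a b : ℝ → ℝ)

theorem radialFamily_comp_reflectCoord_of_ne {i : Fin (n + 1)} {k : Fin n} (hi : i ≠ k.succ) :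
    radialFamily n a b i ∘ reflectCoord k = radialFamily n a b i := by
  funext x
  induction i using Fin.cases with
  | zero => simp [radialFamily]
  | succ m =>
    have hm : m ≠ k := fun h => hi (h ▸ rfl)
    simp [radialFamily, reflectCoord_apply, hm]

theorem radialFamily_succ_comp_reflectCoord (k : Fin n) :
    radialFamily n a b k.succ ∘ reflectCoord k = -radialFamily n a b k.succ := by
  funext x
  simp [radialFamily, reflectCoord_apply, neg_div]

theorem integral_inner_gradient_radialFamily_succ {i : Fin (n + 1)} {k : Fin n}
    (hi : i ≠ k.succ) :
    ∫ x, ⟪gradient (radialFamily n a b i) x, gradient (radialFamily n a b k.succ) x⟫ = 0 :=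
  integral_inner_gradient_eq_zero_of_comp_eq_of_comp_eq_neg (reflectCoord k)
    (reflectCoord k).measurePreserving (radialFamily_comp_reflectCoord_of_ne a b hi)
    (radialFamily_succ_comp_reflectCoord a b k)

theorem gradients_Vi_orthogonal_general (n : ℕ)
    (V : Fin (n + 1) → EuclideanSpace ℝ (Fin n) → ℝ)
    (hV : V = fun k => Fin.cases
      (fun x => (‖x‖ ^ 2 - 1) / (1 + ‖x‖ ^ 2) ^ ((n : ℝ) / 2))
      (fun i x => x i / (1 + ‖x‖ ^ 2) ^ ((n : ℝ) / 2)) k) :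
    ∀ i j : Fin (n + 1), i ≠ j →
      ∫ x, ⟪gradient (V i) x, gradient (V j) x⟫ = 0 := by
  obtain rfl : V = radialFamily n (fun r => (r ^ 2 - 1) / (1 + r ^ 2) ^ ((n : ℝ) / 2))
      (fun r => (1 + r ^ 2) ^ ((n : ℝ) / 2)) := hV
  intro i j hij
  rcases Fin.eq_zero_or_eq_succ j with rfl | ⟨k, rfl⟩
  · obtain ⟨k, rfl⟩ := Fin.exists_succ_eq.2 hij
    simpa only [real_inner_comm] using
      integral_inner_gradient_radialFamily_succ _ _ (Fin.succ_ne_zero k).symm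
  · exact integral_inner_gradient_radialFamily_succ _ _ hij

/-- The functions `V₀(x) = (|x|²-1)/(1+|x|²)^(n/2)` and `Vᵢ(x) = xᵢ/(1+|x|²)^(n/2)`,
`i = 1,…,n`, have pairwise orthogonal gradients in `L²(ℝⁿ)`. -/
theorem gradients_Vi_orthogonal (n : ℕ) (hn : 3 ≤ n)
    (V : Fin (n + 1) → EuclideanSpace ℝ (Fin n) → ℝ)
    (hV : V = fun k => Fin.cases
      (fun x => (‖x‖ ^ 2 - 1) / (1 + ‖x‖ ^ 2) ^ ((n : ℝ) / 2))
      (fun i x => x i / (1 + ‖x‖ ^ 2) ^ ((n : ℝ) / 2)) k) :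
    ∀ i j : Fin (n + 1), i ≠ j →
      ∫ x, ⟪gradient (V i) x, gradient (V j) x⟫ = 0 :=
  gradients_Vi_orthogonal_general n V hV
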